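/- Let B be an ordered branching program of length n and width w, and let H : {0,1}^s → {0,1}^n be an ε-hitting set generator for the class of all ordered branching programs of length n and width at most w². Suppose the real numbers p̃_{x,i} (x ∈ {0,1}^s, 0 ≤ i ≤ n) satisfy |p̃_{x,i} − p_{x,i}| ≤ 2ε for all x and all i < n, and p̃_{x,n} = B(H(x)) for all x. Then all the local consistency tests pass, namely: (1) for every x ∈ {0,1}^s, i < n, and x_0, x_1 ∈ {0,1}^s with B[v_i(x),0] ∼ v_{i+1}(x_0) and B[v_i(x),1] ∼ v_{i+1}(x_1), |p̃_{x,i} − (p̃_{x_0,i+1} + p̃_{x_1,i+1})/2| ≤ 5ε; (2) for every x, x′ ∈ {0,1}^s and i ≤ n with v_i(x) ∼ v_i(x′), |p̃_{x,i} − p̃_{x′,i}| ≤ 5ε; (3) p̃_{x,n} = B(H(x)) for every x ∈ {0,1}^s. -/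

import Mathlib

open Finset
open scoped Classical

/-- An ordered branching program of length `n` and width `w`: each layer's states
are identified with `Fin w`; `next i v b` is the successor of state `v` in layer `i`
on bit `b`; states in the last layer are labeled by `label`. -/
structure OBP (n w : ℕ) where
  start : Fin w
  next : ℕ → Fin w → Bool → Fin w
  label : Fin w → Bool

namespace OBP

/-- The state reached from state `v` in layer `i` after reading `k` bits. -/
def walk {n w : ℕ} (B : OBP n w) : (k : ℕ) → (i : ℕ) → Fin w → (Fin k → Bool) → Fin w
  | 0, _, v, _ => v
  | k + 1, i, v, x => walk B k (i + 1) (B.next i v (x 0)) (fun j => x j.succ)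

/-- The state in layer `i` reached from the start state on a length-`i` input. -/
def reach {n w : ℕ} (B : OBP n w) {i : ℕ} (x : Fin i → Bool) : Fin w :=
  B.walk i 0 B.start x

/-- The boolean output of the program on an `n`-bit input. -/
def eval {n w : ℕ} (B : OBP n w) (x : Fin n → Bool) : Bool :=
  B.label (B.reach x)

end OBP

/-- Expectation of a real-valued function under the uniform distribution. -/
noncomputable def Exp {α : Type*} [Fintype α] (f : α → ℝ) : ℝ :=
  (∑ a, f a) / (Fintype.card α : ℝ)

/-- Probability of an event under the uniform distribution. -/
noncomputable def prob {α : Type*} [Fintype α] (p : α → Prop) : ℝ :=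
  ((Finset.univ.filter p).card : ℝ) / (Fintype.card α : ℝ)

/-- A boolean viewed as a real number. -/
def bval (b : Bool) : ℝ := if b then 1 else 0

/-- The first `k` bits of `x` (padded with `false` if `k > n`). -/
def bits {n : ℕ} (x : Fin n → Bool) (k : ℕ) : Fin k → Bool :=
  fun j => if h : (j : ℕ) < n then x ⟨j, h⟩ else false

/-- `p_{v→}`: the probability of acceptance starting from state `v` in layer `i`,
over a uniformly random suffix of length `n - i`. -/
noncomputable def pAcc {n w : ℕ} (B : OBP n w) (i : ℕ) (v : Fin w) : ℝ :=
  prob (fun r : Fin (n - i) → Bool => B.label (B.walk (n - i) i v r) = true)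

/-- `H` is an `ε`-hitting set generator for all OBPs of length `n` and width `W`. -/
noncomputable def IsHSG (n W s : ℕ) (H : (Fin s → Bool) → Fin n → Bool) (ε : ℝ) : Prop :=
  ∀ B' : OBP n W, ε ≤ Exp (fun x : Fin n → Bool => bval (B'.eval x)) →
    ∃ y : Fin s → Bool, B'.eval (H y) = true

/-- States `u` and `u'` in layer `i` are indistinguishable under `H`:
they behave identically on the length-`(n-i)` prefix of every output of `H`. -/
def Indist {n w s : ℕ} (B : OBP n w) (H : (Fin s → Bool) → Fin n → Bool)
    (i : ℕ) (u u' : Fin w) : Prop :=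
  ∀ y : Fin s → Bool,
    B.walk (n - i) i u (bits (H y) (n - i)) = B.walk (n - i) i u' (bits (H y) (n - i))

/-- `v_i(x)`: the state in layer `i` reached from the start
on the length-`i` prefix of `H x`. -/
def vAt {n w s : ℕ} (B : OBP n w) (H : (Fin s → Bool) → Fin n → Bool)
    (i : ℕ) (x : Fin s → Bool) : Fin w :=
  B.reach (bits (H x) i)

/-- A state `v` in layer `i < n` is unverified if one of its successors is not
reached (in layer `i+1`) by any output of `H`. -/
def Unverified {n w s : ℕ} (B : OBP n w) (H : (Fin s → Bool) → Fin n → Bool)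
    (i : ℕ) (v : Fin w) : Prop :=
  i < n ∧ ∃ b : Bool, ∀ x' : Fin s → Bool, B.next i v b ≠ vAt B H (i + 1) x'

/-!
If `u ∼ u'` in layer `i`, then `|p_{u→} - p_{u'→}| < ε`. Otherwise the width-`w²` program that
runs `B` from `u` and from `u'` in parallel and accepts iff the first run accepts and the second
rejects has acceptance probability at least `p_{u→} - p_{u'→} ≥ ε`, so `H` hits it; but on outputs
of `H` the two runs end in the same state. The consistency tests then follow from the triangle
inequality, since `p_{v→}` is the average of `p` at the two successors of `v` and `p̃` is
`2ε`-close to `p` in every layer (exactly equal in the last one).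
-/

section Expectation

variable {α β : Type*} [Fintype α] [Fintype β]

lemma Exp_sub (f g : α → ℝ) : Exp (fun a => f a - g a) = Exp f - Exp g := by
  simp only [Exp, Finset.sum_sub_distrib, sub_div]

lemma Exp_mono {f g : α → ℝ} (h : ∀ a, f a ≤ g a) : Exp f ≤ Exp g :=
  div_le_div_of_nonneg_right (Finset.sum_le_sum fun a _ => h a) (Nat.cast_nonneg _)

lemma Exp_const [Nonempty α] (c : ℝ) : Exp (fun _ : α => c) = c := by
  have : (Fintype.card α : ℝ) ≠ 0 := Nat.cast_ne_zero.2 Fintype.card_ne_zero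
  simp only [Exp, Finset.sum_const, Finset.card_univ, nsmul_eq_mul]
  field_simp

lemma Exp_comp_equiv (e : α ≃ β) (f : β → ℝ) : Exp (fun a => f (e a)) = Exp f := by
  simp only [Exp, e.sum_comp, Fintype.card_congr e]

lemma Exp_comp_fst [Nonempty β] (f : α → ℝ) : Exp (fun q : α × β => f q.1) = Exp f := by
  have : (Fintype.card β : ℝ) ≠ 0 := Nat.cast_ne_zero.2 Fintype.card_ne_zero
  simp only [Exp, Fintype.sum_prod_type, Finset.sum_const, Finset.card_univ, nsmul_eq_mul,
    ← Finset.mul_sum, Fintype.card_prod, Nat.cast_mul]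
  field_simp

lemma Exp_comp_bits {m N : ℕ} (hm : m ≤ N) (f : (Fin m → Bool) → ℝ) :
    Exp (fun x : Fin N → Bool => f (bits x m)) = Exp f := by
  obtain ⟨k, rfl⟩ := Nat.exists_eq_add_of_le hm
  have bits_append : ∀ q : (Fin m → Bool) × (Fin k → Bool),
      bits (Fin.appendEquiv m k q) m = q.1 := by
    rintro ⟨a, b⟩
    funext j
    simp only [bits, dif_pos (Nat.lt_add_right k j.isLt)]
    exact Fin.append_left a b j
  rw [← Exp_comp_equiv (Fin.appendEquiv m k), ← Exp_comp_fst (β := Fin k → Bool) f]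
  simp only [bits_append]

lemma Exp_fin_cons {k : ℕ} (f : (Fin (k + 1) → Bool) → ℝ) :
    Exp f = (Exp (fun r => f (Fin.cons false r)) + Exp (fun r => f (Fin.cons true r))) / 2 := by
  rw [← Exp_comp_equiv (Fin.consEquiv fun _ => Bool) f]
  change Exp (fun q : Bool × (Fin k → Bool) => f (Fin.cons q.1 q.2)) = _
  simp only [Exp, Fintype.sum_prod_type, Fintype.sum_bool, Fintype.card_prod, Fintype.card_bool,
    Nat.cast_mul]
  ring

lemma prob_eq_Exp_bval (f : α → Bool) : prob (fun a => f a = true) = Exp (fun a => bval (f a)) := by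
  simp only [prob, Exp, Finset.natCast_card_filter, bval]
  congr!

end Expectation

lemma bval_sub_le_bval_and_not (a b : Bool) : bval a - bval b ≤ bval (a && !b) := by
  cases a <;> cases b <;> norm_num [bval]

def pairEquiv (w : ℕ) : Fin w × Fin w ≃ Fin (w ^ 2) :=
  finProdFinEquiv.trans (finCongr (sq w).symm)

namespace OBP

variable {n w : ℕ} (B : OBP n w)

lemma walk_bits_succ {k : ℕ} (m i : ℕ) (v : Fin w) (x : Fin (k + 1) → Bool) :
    B.walk (m + 1) i v (bits x (m + 1)) =
      B.walk m (i + 1) (B.next i v (x 0)) (bits (Fin.tail x) m) := by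
  have head : bits x (m + 1) 0 = x 0 := dif_pos k.succ_pos
  have tail : (fun j : Fin m => bits x (m + 1) j.succ) = bits (Fin.tail x) m := by
    funext j
    by_cases hj : (j : ℕ) < k
    · simp [bits, hj, Fin.tail]
    · simp [bits, hj]
  rw [walk, head, tail]

lemma pAcc_eq_Exp {i k : ℕ} (h : n - i = k) (v : Fin w) :
    pAcc B i v = Exp (fun r : Fin k → Bool => bval (B.label (B.walk k i v r))) := by
  subst h
  exact prob_eq_Exp_bval _

lemma pAcc_eq_avg_next {i : ℕ} (hi : i < n) (v : Fin w) :
    pAcc B i v = (pAcc B (i + 1) (B.next i v false) + pAcc B (i + 1) (B.next i v true)) / 2 := by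
  rw [B.pAcc_eq_Exp (show n - i = n - (i + 1) + 1 by omega), Exp_fin_cons,
    B.pAcc_eq_Exp rfl, B.pAcc_eq_Exp rfl]
  simp only [walk, Fin.cons_zero, Fin.cons_succ]

lemma pAcc_last (v : Fin w) : pAcc B n v = bval (B.label v) := by
  rw [B.pAcc_eq_Exp (Nat.sub_self n)]
  exact Exp_const (α := Fin 0 → Bool) _

def distinguisher (i : ℕ) (u u' : Fin w) : OBP n (w ^ 2) where
  start := pairEquiv w (u, u')
  next j p b :=
    if j < n - i then
      pairEquiv w (B.next (i + j) ((pairEquiv w).symm p).1 b,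
        B.next (i + j) ((pairEquiv w).symm p).2 b)
    else p
  label p := B.label ((pairEquiv w).symm p).1 && !B.label ((pairEquiv w).symm p).2

lemma distinguisher_next (i : ℕ) (u u' : Fin w) (j : ℕ) (a b : Fin w) (c : Bool) :
    (B.distinguisher i u u').next j (pairEquiv w (a, b)) c =
      if j < n - i then pairEquiv w (B.next (i + j) a c, B.next (i + j) b c)
      else pairEquiv w (a, b) := by
  simp only [distinguisher, Equiv.symm_apply_apply]

lemma walk_distinguisher (i : ℕ) (u u' : Fin w) (k j : ℕ) (a b : Fin w) (x : Fin k → Bool) :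
    (B.distinguisher i u u').walk k j (pairEquiv w (a, b)) x =
      pairEquiv w (B.walk (min k (n - i - j)) (i + j) a (bits x (min k (n - i - j))),
        B.walk (min k (n - i - j)) (i + j) b (bits x (min k (n - i - j)))) := by
  induction k generalizing j a b with
  | zero => rw [Nat.zero_min]; rfl
  | succ k ih =>
    rw [walk, distinguisher_next]
    split_ifs with hj
    · rw [ih, show min (k + 1) (n - i - j) = min k (n - i - (j + 1)) + 1 by omega,
        B.walk_bits_succ, B.walk_bits_succ, ← add_assoc]
      rfl
    · rw [ih, show min k (n - i - (j + 1)) = 0 by omega, show min (k + 1) (n - i - j) = 0 by omega]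
      rfl

lemma eval_distinguisher (i : ℕ) (u u' : Fin w) (x : Fin n → Bool) :
    (B.distinguisher i u u').eval x =
      (B.label (B.walk (n - i) i u (bits x (n - i))) &&
        !B.label (B.walk (n - i) i u' (bits x (n - i)))) := by
  have hmin : min n (n - i - 0) = n - i := by omega
  simp only [eval, reach]
  rw [show (B.distinguisher i u u').start = pairEquiv w (u, u') from rfl, walk_distinguisher, hmin]
  simp [distinguisher]

end OBP

lemma abs_pAcc_sub_lt_of_indist {n w s : ℕ} {B : OBP n w} {H : (Fin s → Bool) → Fin n → Bool}
    {ε : ℝ} (hH : IsHSG n (w ^ 2) s H ε) {i : ℕ} {u u' : Fin w} (hind : Indist B H i u u') :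
    |pAcc B i u - pAcc B i u'| < ε := by
  suffices key : ∀ {u u'}, Indist B H i u u' → pAcc B i u - pAcc B i u' < ε from
    abs_sub_lt_iff.2 ⟨key hind, key fun y => (hind y).symm⟩
  intro u u' hind
  by_contra! hge
  have hexp : ε ≤ Exp (fun x => bval ((B.distinguisher i u u').eval x)) :=
    calc ε ≤ pAcc B i u - pAcc B i u' := hge
      _ ≤ Exp (fun r : Fin (n - i) → Bool =>
            bval (B.label (B.walk (n - i) i u r) && !B.label (B.walk (n - i) i u' r))) := by
        rw [B.pAcc_eq_Exp rfl, B.pAcc_eq_Exp rfl, ← Exp_sub]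
        exact Exp_mono fun r => bval_sub_le_bval_and_not _ _
      _ = Exp (fun x => bval ((B.distinguisher i u u').eval x)) := by
        simp only [OBP.eval_distinguisher]
        exact (Exp_comp_bits (Nat.sub_le n i) _).symm
  obtain ⟨y, hy⟩ := hH _ hexp
  rw [OBP.eval_distinguisher, hind y] at hy
  simp at hy

lemma abs_pt_sub_pAcc_le {n w s : ℕ} {B : OBP n w} {ε : ℝ} (hε : 0 ≤ ε)
    {H : (Fin s → Bool) → Fin n → Bool} {pt : (Fin s → Bool) → ℕ → ℝ}
    (h1 : ∀ x i, i < n → |pt x i - pAcc B i (vAt B H i x)| ≤ 2 * ε)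
    (h2 : ∀ x, pt x n = bval (B.eval (H x))) {x : Fin s → Bool} {i : ℕ} (hi : i ≤ n) :
    |pt x i - pAcc B i (vAt B H i x)| ≤ 2 * ε := by
  rcases hi.lt_or_eq with hi | rfl
  · exact h1 x i hi
  · have hbits : bits (H x) i = H x := funext fun j => dif_pos j.isLt
    rw [h2, B.pAcc_last, vAt, hbits, OBP.eval, sub_self, abs_zero]
    positivity

theorem stmt13 {n w s : ℕ} (B : OBP n w) (ε : ℝ)
    (H : (Fin s → Bool) → Fin n → Bool) (hH : IsHSG n (w ^ 2) s H ε)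
    (pt : (Fin s → Bool) → ℕ → ℝ)
    (h1 : ∀ (x : Fin s → Bool) (i : ℕ), i < n →
      |pt x i - pAcc B i (vAt B H i x)| ≤ 2 * ε)
    (h2 : ∀ x : Fin s → Bool, pt x n = bval (B.eval (H x))) :
    (∀ (x x₀ x₁ : Fin s → Bool) (i : ℕ), i < n →
      Indist B H (i + 1) (B.next i (vAt B H i x) false) (vAt B H (i + 1) x₀) →
      Indist B H (i + 1) (B.next i (vAt B H i x) true) (vAt B H (i + 1) x₁) →
      |pt x i - (pt x₀ (i + 1) + pt x₁ (i + 1)) / 2| ≤ 5 * ε) ∧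
    (∀ (x x' : Fin s → Bool) (i : ℕ), i ≤ n →
      Indist B H i (vAt B H i x) (vAt B H i x') → |pt x i - pt x' i| ≤ 5 * ε) ∧
    (∀ x : Fin s → Bool, pt x n = bval (B.eval (H x))) := by
  have hε : 0 < ε := by
    simpa using abs_pAcc_sub_lt_of_indist hH (fun _ => rfl : Indist B H 0 B.start B.start)
  have close := fun x {i} (hi : i ≤ n) => abs_le.1 (abs_pt_sub_pAcc_le hε.le h1 h2 (x := x) hi)
  refine ⟨fun x x₀ x₁ i hi hind₀ hind₁ => abs_le.2 ?_, fun x x' i hi hind => abs_le.2 ?_, h2⟩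
  · have havg := B.pAcc_eq_avg_next hi (vAt B H i x)
    obtain ⟨h₀, h₀'⟩ := abs_lt.1 (abs_pAcc_sub_lt_of_indist hH hind₀)
    obtain ⟨h₁, h₁'⟩ := abs_lt.1 (abs_pAcc_sub_lt_of_indist hH hind₁)
    obtain ⟨c, c'⟩ := close x hi.le
    obtain ⟨c₀, c₀'⟩ := close x₀ (i := i + 1) hi
    obtain ⟨c₁, c₁'⟩ := close x₁ (i := i + 1) hi
    constructor <;> linarith
  · obtain ⟨h, h'⟩ := abs_lt.1 (abs_pAcc_sub_lt_of_indist hH hind)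
    obtain ⟨c, c'⟩ := close x hi
    obtain ⟨d, d'⟩ := close x' hi
    constructor <;> linarith
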